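/- Let $L$ be a finite lattice, $P = L \setminus \{\hat{0}, \hat{1}\}$, and $y \in P$. Then the order complex of $P \setminus Co(y)$ is contractible, where $Co(y)$ is the set of complements of $y$. -/

import Mathlib

/-!
The elements `x` with `x ⊔ y ≠ ⊤` form a down-set `A` of `P \ Co(y)` whose order complex is a
cone: `x ≤ x ⊔ y ≥ y` joins the identity to a constant through comparable order-preserving maps
(Quillen). Every other element `e` has `e ⊔ y = ⊤`, hence `e ⊓ y ≠ ⊥`. Adding these back, minimal
ones first, the link of `e` is again a cone: its part below `e` lies in `A`, and `x ↦ x ⊔ (e ⊓ y)`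
(the identity above `e`) joins the identity to the constant `e ⊓ y`. Attaching a vertex along a
contractible link preserves contractibility.

In the geometric realization, comparable order-preserving maps `f ≤ g` are joined by moving the
weight of each vertex `x` from `g x` to `f x`, lowest vertices of the chain first.
-/

open Function

/-- The (geometric realization of the) order complex of a poset `P`:
finitely supported probability weight functions whose support is a chain. -/
def orderComplex (P : Type*) [PartialOrder P] : Set (P → ℝ) :=
  {w | (∀ p, 0 ≤ w p) ∧ (support w).Finite ∧ ∑ᶠ p, w p = 1 ∧
    IsChain (· ≤ ·) (support w)}

instance (P : Type*) [PartialOrder P] : TopologicalSpace ↥(orderComplex P) :=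
  inferInstance

theorem MonotoneOn.isChain_image {α β : Type*} [Preorder α] [Preorder β] {s t : Set α}
    {f : α → β} (hf : MonotoneOn f t) (hst : s ⊆ t) (hs : IsChain (· ≤ ·) s) :
    IsChain (· ≤ ·) (f '' s) := by
  rintro _ ⟨a, ha, rfl⟩ _ ⟨b, hb, rfl⟩ -
  exact (hs.total ha hb).imp (hf (hst ha) (hst hb)) (hf (hst hb) (hst ha))

theorem isClosed_setOf_support_subset {ι M : Type*} [TopologicalSpace M] [T1Space M] [Zero M]
    (s : Set ι) : IsClosed {w : ι → M | Function.support w ⊆ s} := by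
  have : {w : ι → M | Function.support w ⊆ s} = ⋂ x ∈ sᶜ, {w | w x = 0} := by
    ext w
    simp only [Set.mem_ofPred_eq, Function.support_subset_iff', Set.mem_iInter, Set.mem_compl_iff]
  rw [this]
  exact isClosed_biInter fun x _ => isClosed_singleton.preimage (continuous_apply x)

theorem nullhomotopic_id_of_deformation {Z : Type*} [TopologicalSpace Z] {A B : Set Z}
    (hAB : A ⊆ B) (H : unitInterval × B → Z) (hH : Continuous H) (hHB : ∀ a, H a ∈ B)
    (h0 : ∀ x, H (0, x) = x) (h1 : ∀ x, H (1, x) ∈ A)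
    (hA : (ContinuousMap.id A).Nullhomotopic) :
    (ContinuousMap.id B).Nullhomotopic := by
  let r : C(B, A) := ⟨fun x => ⟨H (1, x), h1 x⟩,
    (hH.comp (continuous_const.prodMk continuous_id)).subtype_mk _⟩
  let ι : C(A, B) := ⟨Set.inclusion hAB, continuous_inclusion hAB⟩
  have hdef : (ContinuousMap.id B).Homotopic (ι.comp r) :=
    ⟨{ toFun := fun a => ⟨H a, hHB a⟩
       continuous_toFun := hH.subtype_mk _
       map_zero_left := fun x => Subtype.ext (h0 x)
       map_one_left := fun _ => rfl }⟩
  obtain ⟨c, hc⟩ := (hA.comp_left r).comp_right ι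
  exact ⟨c, hdef.trans hc⟩

noncomputable section

namespace OrderComplex

open Set Filter Topology
open scoped Classical

section Pushforward

variable {T : Type*} [Fintype T]

def pushforward (g : T → T) (w : T → ℝ) : T → ℝ :=
  ∑ x, w x • Pi.single (g x) 1

theorem pushforward_apply (g : T → T) (w : T → ℝ) (q : T) :
    pushforward g w q = ∑ x, if g x = q then w x else 0 := by
  simp [pushforward, Pi.single_apply, eq_comm]

theorem pushforward_nonneg {g : T → T} {w : T → ℝ} (hw : ∀ p, 0 ≤ w p) (q : T) :
    0 ≤ pushforward g w q := by
  rw [pushforward_apply]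
  exact Finset.sum_nonneg fun x _ => by split_ifs <;> simp [hw x]

theorem sum_pushforward (g : T → T) (w : T → ℝ) : ∑ q, pushforward g w q = ∑ x, w x := by
  simp_rw [pushforward_apply]
  rw [Finset.sum_comm]
  simp

theorem support_pushforward_subset (g : T → T) (w : T → ℝ) :
    support (pushforward g w) ⊆ g '' support w := by
  intro q hq
  rw [mem_support, pushforward_apply] at hq
  obtain ⟨x, -, hx⟩ := Finset.exists_ne_zero_of_sum_ne_zero hq
  by_cases hgx : g x = q
  · exact ⟨x, by simpa [hgx] using hx, hgx⟩
  · simp [hgx] at hx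

theorem pushforward_id (w : T → ℝ) : pushforward id w = w := by
  funext q
  simp [pushforward_apply]

theorem pushforward_const (z : T) {w : T → ℝ} (hw : ∑ p, w p = 1) :
    pushforward (fun _ => z) w = Pi.single z 1 := by
  simp [pushforward, ← Finset.sum_smul, hw]

theorem continuous_pushforward (g : T → T) : Continuous (pushforward g) := by
  unfold pushforward
  fun_prop

end Pushforward

section Link

variable {T : Type*} [Preorder T]

def link (V : Set T) (e : T) : Set T :=
  {x ∈ V | x < e ∨ e < x}

theorem link_subset {V : Set T} {e : T} : link V e ⊆ V \ {e} :=
  fun _ hx => ⟨hx.1, hx.2.elim (fun h => h.ne) (fun h => h.ne')⟩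

end Link

variable {T : Type*} [PartialOrder T] [Fintype T]

/-- The order complex of the subposet `V`, realized inside that of `T`. -/
def induced (V : Set T) : Set (T → ℝ) :=
  {w | (∀ p, 0 ≤ w p) ∧ support w ⊆ V ∧ ∑ p, w p = 1 ∧ IsChain (· ≤ ·) (support w)}

theorem orderComplex_eq_induced_univ : orderComplex T = induced univ := by
  ext w
  simp [orderComplex, induced, finsum_eq_sum_of_fintype, toFinite]

theorem induced_mono : Monotone (induced : Set T → Set (T → ℝ)) :=
  fun _ _ h _ hw => ⟨hw.1, hw.2.1.trans h, hw.2.2⟩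

theorem le_one_of_mem_induced {V : Set T} {w : T → ℝ} (hw : w ∈ induced V) (q : T) :
    w q ≤ 1 :=
  hw.2.2.1 ▸ Finset.single_le_sum (fun p _ => hw.1 p) (Finset.mem_univ q)

theorem norm_le_one_of_mem_induced {V : Set T} {w : T → ℝ} (hw : w ∈ induced V) :
    ‖w‖ ≤ 1 :=
  (pi_norm_le_iff_of_nonneg zero_le_one).2 fun q => by
    rw [Real.norm_of_nonneg (hw.1 q)]
    exact le_one_of_mem_induced hw q

theorem zero_notMem_induced (V : Set T) : (0 : T → ℝ) ∉ induced V :=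
  fun h => by simpa using h.2.2.1

theorem single_mem_induced {V : Set T} {v : T} (hv : v ∈ V) :
    (Pi.single v 1 : T → ℝ) ∈ induced V := by
  have hsupp : support (Pi.single v 1 : T → ℝ) = {v} :=
    Pi.support_single_of_ne one_ne_zero
  refine ⟨fun p => ?_, by simpa [hsupp] using hv, by simp, by simp [hsupp]⟩
  rw [Pi.single_apply]
  split_ifs <;> norm_num

theorem eq_single_of_apply_eq_one {V : Set T} {w : T → ℝ} {e : T} (hw : w ∈ induced V)
    (he : w e = 1) : w = Pi.single e 1 := by
  funext q
  rcases eq_or_ne q e with rfl | hq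
  · simp [he]
  · have hsum : w q + w e ≤ 1 := hw.2.2.1 ▸ Finset.add_le_sum (fun p _ => hw.1 p)
      (Finset.mem_univ q) (Finset.mem_univ e) hq
    simp only [Pi.single_apply, hq, if_false]
    linarith [hw.1 q]

section Sweep

def massBelow (w : T → ℝ) (x : T) : ℝ :=
  ∑ p with p < x, w p

theorem massBelow_nonneg {w : T → ℝ} (hw : ∀ p, 0 ≤ w p) (x : T) : 0 ≤ massBelow w x :=
  Finset.sum_nonneg fun p _ => hw p

theorem massBelow_add_le_massBelow {w : T → ℝ} (hw : ∀ p, 0 ≤ w p) {a b : T} (hab : a < b) :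
    massBelow w a + w a ≤ massBelow w b := by
  unfold massBelow
  rw [add_comm, ← Finset.sum_insert (s := {p | p < a}) (by simp)]
  refine Finset.sum_le_sum_of_subset_of_nonneg ?_ fun p _ _ => hw p
  intro p hp
  simp only [Finset.mem_insert, Finset.mem_filter, Finset.mem_univ, true_and] at hp ⊢
  rcases hp with rfl | hp
  exacts [hab, hp.trans hab]

theorem massBelow_add_le_one {w : T → ℝ} (hw : ∀ p, 0 ≤ w p) (hsum : ∑ p, w p = 1) (x : T) :
    massBelow w x + w x ≤ 1 := by
  unfold massBelow
  rw [add_comm, ← Finset.sum_insert (s := {p | p < x}) (by simp), ← hsum]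
  exact Finset.sum_le_sum_of_subset_of_nonneg (Finset.subset_univ _) fun p _ _ => hw p

/-- Mass moved at unit speed, lowest vertex first: at every time the vertices already moved form
an initial segment of the chain. -/
def movedMass (w : T → ℝ) (t : ℝ) (x : T) : ℝ :=
  min (w x) (max (t - massBelow w x) 0)

theorem movedMass_nonneg {w : T → ℝ} (hw : ∀ p, 0 ≤ w p) (t : ℝ) (x : T) :
    0 ≤ movedMass w t x :=
  le_min (hw x) (le_max_right _ _)

theorem movedMass_le (w : T → ℝ) (t : ℝ) (x : T) : movedMass w t x ≤ w x :=
  min_le_left _ _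

theorem movedMass_zero {w : T → ℝ} (hw : ∀ p, 0 ≤ w p) : movedMass w 0 = 0 := by
  funext x
  simp [movedMass, massBelow_nonneg hw x, hw x]

theorem movedMass_one {w : T → ℝ} (hw : ∀ p, 0 ≤ w p) (hsum : ∑ p, w p = 1) :
    movedMass w 1 = w := by
  funext x
  have := massBelow_add_le_one hw hsum x
  exact min_eq_left (le_max_of_le_left (by linarith))

theorem le_of_movedMass_lt_of_movedMass_pos {V : Set T} {w : T → ℝ} (hw : w ∈ induced V)
    {t : ℝ} {a b : T} (ha : a ∈ support w) (hb : b ∈ support w)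
    (hlt : movedMass w t a < w a) (hpos : 0 < movedMass w t b) : b ≤ a := by
  by_contra hba
  have hab : a < b := lt_of_le_of_ne ((hw.2.2.2.total ha hb).resolve_right hba)
    (by rintro rfl; exact hba le_rfl)
  have hbt : massBelow w b < t := by
    by_contra! h
    simp [movedMass, h] at hpos
  have := massBelow_add_le_massBelow hw.1 hab
  exact hlt.ne (min_eq_left (le_max_of_le_left (by linarith)))

def sweep (f g : T → T) (w : T → ℝ) (t : ℝ) : T → ℝ :=
  pushforward g (w - movedMass w t) + pushforward f (movedMass w t)

theorem sweep_zero (f g : T → T) {w : T → ℝ} (hw : ∀ p, 0 ≤ w p) :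
    sweep f g w 0 = pushforward g w := by
  simp [sweep, movedMass_zero hw, pushforward]

theorem sweep_one (f g : T → T) {w : T → ℝ} (hw : ∀ p, 0 ≤ w p) (hsum : ∑ p, w p = 1) :
    sweep f g w 1 = pushforward f w := by
  simp [sweep, movedMass_one hw hsum, pushforward]

theorem sweep_mem_induced {V : Set T} {f g : T → T} (hfV : MapsTo f V V) (hgV : MapsTo g V V)
    (hf : MonotoneOn f V) (hg : MonotoneOn g V) (hfg : ∀ v ∈ V, f v ≤ g v)
    {w : T → ℝ} (hw : w ∈ induced V) (t : ℝ) : sweep f g w t ∈ induced V := by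
  obtain ⟨hw0, hwV, hsum, hchain⟩ := hw
  set m := movedMass w t
  have hm0 : ∀ p, 0 ≤ m p := movedMass_nonneg hw0 t
  have hrest0 : ∀ p, 0 ≤ (w - m) p := fun p => sub_nonneg.2 (movedMass_le w t p)
  have hsupp_rest : support (w - m) ⊆ {x ∈ support w | m x < w x} := by
    intro x hx
    have hlt := (movedMass_le w t x).lt_of_ne (sub_ne_zero.1 hx).symm
    exact ⟨(hm0 x).trans_lt hlt |>.ne', hlt⟩
  have hsupp_m : support m ⊆ {x ∈ support w | 0 < m x} := by
    intro x hx
    have hpos := (hm0 x).lt_of_ne (Ne.symm hx)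
    exact ⟨(hpos.trans_le (movedMass_le w t x)).ne', hpos⟩
  have hsupp : support (sweep f g w t) ⊆
      g '' {x ∈ support w | m x < w x} ∪ f '' {x ∈ support w | 0 < m x} :=
    (support_add _ _).trans <| Set.union_subset_union
      ((support_pushforward_subset g _).trans (Set.image_mono hsupp_rest))
      ((support_pushforward_subset f _).trans (Set.image_mono hsupp_m))
  have hsub : ∀ {P : T → Prop}, {x ∈ support w | P x} ⊆ V := fun hx => hwV hx.1
  refine ⟨fun q => add_nonneg (pushforward_nonneg hrest0 q) (pushforward_nonneg hm0 q),
    hsupp.trans (Set.union_subset (hgV.mono_left hsub).image_subset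
      (hfV.mono_left hsub).image_subset), ?_, ?_⟩
  · simp [sweep, Finset.sum_add_distrib, sum_pushforward, hsum]
  · refine IsChain.mono hsupp (isChain_union.2 ⟨hg.isChain_image hsub
      (hchain.mono fun x hx => hx.1), hf.isChain_image hsub (hchain.mono fun x hx => hx.1), ?_⟩)
    rintro _ ⟨a, ha, rfl⟩ _ ⟨b, hb, rfl⟩ -
    have hba := le_of_movedMass_lt_of_movedMass_pos ⟨hw0, hwV, hsum, hchain⟩ ha.1 hb.1 ha.2 hb.2
    exact Or.inr ((hf (hwV hb.1) (hwV ha.1) hba).trans (hfg a (hwV ha.1)))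

theorem continuous_sweep (f g : T → T) :
    Continuous fun a : (T → ℝ) × ℝ => sweep f g a.1 a.2 := by
  have hm : Continuous fun a : (T → ℝ) × ℝ => movedMass a.1 a.2 := by
    refine continuous_pi fun x => ?_
    unfold movedMass massBelow
    fun_prop
  exact ((continuous_pushforward g).comp (continuous_fst.sub hm)).add
    ((continuous_pushforward f).comp hm)

end Sweep

section InducedMap

variable {V : Set T}

theorem pushforward_mem_induced {g : T → T} (hgV : MapsTo g V V) (hg : MonotoneOn g V)
    {w : T → ℝ} (hw : w ∈ induced V) : pushforward g w ∈ induced V := by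
  simpa [sweep_zero g g hw.1] using sweep_mem_induced hgV hgV hg hg (fun _ _ => le_rfl) hw 0

def inducedMap {g : T → T} (hgV : MapsTo g V V) (hg : MonotoneOn g V) :
    C(induced V, induced V) where
  toFun w := ⟨pushforward g w, pushforward_mem_induced hgV hg w.2⟩
  continuous_toFun := ((continuous_pushforward g).comp continuous_subtype_val).subtype_mk _

theorem inducedMap_homotopic {f g : T → T} (hfV : MapsTo f V V) (hgV : MapsTo g V V)
    (hf : MonotoneOn f V) (hg : MonotoneOn g V) (hfg : ∀ v ∈ V, f v ≤ g v) :
    (inducedMap hgV hg).Homotopic (inducedMap hfV hf) :=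
  ⟨{ toFun := fun a => ⟨sweep f g a.2 a.1, sweep_mem_induced hfV hgV hf hg hfg a.2.2 a.1⟩
     continuous_toFun := ((continuous_sweep f g).comp
       ((continuous_subtype_val.comp continuous_snd).prodMk
         (continuous_subtype_val.comp continuous_fst))).subtype_mk _
     map_zero_left := fun w => Subtype.ext (sweep_zero f g w.2.1)
     map_one_left := fun w => Subtype.ext (sweep_one f g w.2.1 w.2.2.2.1) }⟩

theorem inducedMap_id : inducedMap (mapsTo_id V) monotoneOn_id = ContinuousMap.id _ :=
  ContinuousMap.ext fun w => Subtype.ext (pushforward_id w.1)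

theorem inducedMap_const {z : T} (hz : z ∈ V) :
    inducedMap (fun _ _ => hz : MapsTo (fun _ => z) V V) monotoneOn_const =
      ContinuousMap.const _ ⟨Pi.single z 1, single_mem_induced hz⟩ :=
  ContinuousMap.ext fun w => Subtype.ext (pushforward_const z w.2.2.2.1)

theorem nullhomotopic_of_conical {z : T} (hz : z ∈ V) {G : T → T} (hGV : MapsTo G V V)
    (hG : MonotoneOn G V) (hid : ∀ v ∈ V, v ≤ G v) (hzG : ∀ v ∈ V, z ≤ G v) :
    (ContinuousMap.id (induced V)).Nullhomotopic := by
  refine ⟨⟨Pi.single z 1, single_mem_induced hz⟩, ?_⟩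
  rw [← inducedMap_id, ← inducedMap_const hz]
  exact (inducedMap_homotopic _ hGV monotoneOn_id hG hid).symm.trans
    (inducedMap_homotopic _ hGV monotoneOn_const hG hzG)

end InducedMap

section Link

variable {V : Set T} {e : T} {w : T → ℝ}

theorem support_subset_insert_link (hw : w ∈ induced V) (he : w e ≠ 0) :
    support w ⊆ insert e (link V e) := by
  intro x hx
  rcases eq_or_ne x e with rfl | hxe
  · exact mem_insert _ _
  · refine mem_insert_of_mem _ ⟨hw.2.1 hx, ?_⟩
    rcases hw.2.2.2.total hx (show e ∈ support w from he) with h | h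
    exacts [Or.inl (h.lt_of_ne hxe), Or.inr (h.lt_of_ne hxe.symm)]

theorem smul_single_add_smul_mem_induced (he : e ∈ V) {c : ℝ} (hc0 : 0 ≤ c) (hc1 : c ≤ 1)
    {v : T → ℝ} (hv : v ∈ induced (link V e)) :
    c • Pi.single e 1 + (1 - c) • v ∈ induced V := by
  have hsupp : support (c • Pi.single e 1 + (1 - c) • v) ⊆ insert e (support v) := by
    refine (support_add _ _).trans (union_subset ?_ ?_)
    · exact (support_smul_subset_right _ _).trans
        ((Pi.support_single_subset).trans (singleton_subset_iff.2 (mem_insert _ _)))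
    · exact (support_smul_subset_right _ _).trans (subset_insert _ _)
  have hchain : IsChain (· ≤ ·) (insert e (support v)) :=
    hv.2.2.2.insert fun x hx _ => ((hv.2.1 hx).2.symm).imp le_of_lt le_of_lt
  refine ⟨fun q => ?_, hsupp.trans (insert_subset he fun x hx => (hv.2.1 hx).1), ?_,
    hchain.mono hsupp⟩
  · have := (single_mem_induced (V := V) he).1 q
    have := hv.1 q
    simp only [Pi.add_apply, Pi.smul_apply, smul_eq_mul]
    nlinarith
  · simp [Finset.sum_add_distrib, ← Finset.mul_sum, hv.2.2.1]

/-- The barycentric coordinates of `w` on the face opposite to `e`; junk value `0` when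
`w e = 1`. -/
def linkPart (e : T) (w : T → ℝ) : T → ℝ :=
  (1 - w e)⁻¹ • update w e 0

theorem linkPart_mem_induced (hw : w ∈ induced V) (hstar : support w ⊆ insert e (link V e))
    (h1 : w e ≠ 1) : linkPart e w ∈ induced (link V e) := by
  have hpos : 0 < 1 - w e := sub_pos.2 ((le_one_of_mem_induced hw e).lt_of_ne h1)
  have hsupp : support (linkPart e w) ⊆ support w \ {e} :=
    (support_smul_subset_right _ _).trans fun x hx =>
      ⟨fun h => hx (by rcases eq_or_ne x e with rfl | hxe <;> simp [*]),
        fun hxe => hx (by simp [show x = e from hxe])⟩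
  refine ⟨fun q => ?_, fun x hx => ?_, ?_, hw.2.2.2.mono (hsupp.trans sdiff_subset)⟩
  · rcases eq_or_ne q e with rfl | hq
    · simp [linkPart]
    · simpa [linkPart, hq] using mul_nonneg (inv_nonneg.2 hpos.le) (hw.1 q)
  · obtain ⟨hxw, hxe⟩ := hsupp hx
    exact (hstar hxw).resolve_left hxe
  · have hsum : ∑ q, update w e 0 q = 1 - w e := by
      rw [← hw.2.2.1, Finset.sum_update_of_mem (Finset.mem_univ e),
        ← Finset.add_sum_erase _ _ (Finset.mem_univ e)]
      simp
    simp [linkPart, ← Finset.mul_sum, hsum, hpos.ne']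

end Link

section Deformation

variable {W : Set T} {p : induced W}

def extendHomotopy (K : (ContinuousMap.id (induced W)).Homotopy (ContinuousMap.const _ p))
    (τ : ℝ) (v : T → ℝ) : T → ℝ :=
  if h : v ∈ induced W then K (projIcc 0 1 zero_le_one τ, ⟨v, h⟩) else p

variable (K : (ContinuousMap.id (induced W)).Homotopy (ContinuousMap.const _ p))

theorem extendHomotopy_mem (τ : ℝ) (v : T → ℝ) : extendHomotopy K τ v ∈ induced W := by
  unfold extendHomotopy
  split_ifs
  exacts [Subtype.prop _, p.2]

theorem extendHomotopy_of_nonpos {τ : ℝ} (hτ : τ ≤ 0) {v : T → ℝ} (hv : v ∈ induced W) :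
    extendHomotopy K τ v = v := by
  have h0 : projIcc (0 : ℝ) 1 zero_le_one τ = 0 := projIcc_of_le_left _ hτ
  simp [extendHomotopy, hv, h0]

theorem extendHomotopy_of_one_le {τ : ℝ} (hτ : 1 ≤ τ) (v : T → ℝ) :
    extendHomotopy K τ v = p := by
  have h1 : projIcc (0 : ℝ) 1 zero_le_one τ = 1 := projIcc_of_right_le _ hτ
  unfold extendHomotopy
  split_ifs <;> simp [h1]

theorem continuousOn_extendHomotopy :
    ContinuousOn (fun q : ℝ × (T → ℝ) => extendHomotopy K q.1 q.2) (univ ×ˢ induced W) := by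
  rw [continuousOn_iff_continuous_domRestrict]
  refine Continuous.congr (f := fun q : ↥(univ ×ˢ induced W) =>
    (K (projIcc 0 1 zero_le_one q.1.1, ⟨q.1.2, q.2.2⟩) : T → ℝ)) ?_ fun q => ?_
  · fun_prop
  · simp [extendHomotopy, q.2.2]

end Deformation

section Star

variable {V : Set T} {e : T} {p : induced (link V e)}
  (K : (ContinuousMap.id (induced (link V e))).Homotopy (ContinuousMap.const _ p))

/-- The `e`-coordinate decays like `1 - t` while the link coordinates are contracted by `K` for
the time `t * w e / (1 - w e)`: not at all on the link, fast near the vertex `e`. -/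
def starFlow (t : ℝ) (w : T → ℝ) : T → ℝ :=
  ((1 - t) * w e) • Pi.single e 1 +
    (1 - (1 - t) * w e) • extendHomotopy K (t * w e / (1 - w e)) (linkPart e w)

theorem starFlow_mem_induced (he : e ∈ V) {t : ℝ} (ht : t ∈ unitInterval) {w : T → ℝ}
    (hw : w ∈ induced V) : starFlow K t w ∈ induced V := by
  have hwe := hw.1 e
  have hwe1 := le_one_of_mem_induced hw e
  exact smul_single_add_smul_mem_induced he (mul_nonneg (by linarith [ht.2]) hwe)
    (by nlinarith [ht.1, ht.2]) (extendHomotopy_mem K _ _)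

theorem starFlow_one_mem_induced (w : T → ℝ) : starFlow K 1 w ∈ induced (V \ {e}) := by
  simpa [starFlow] using induced_mono link_subset (extendHomotopy_mem K _ _)

theorem starFlow_zero {w : T → ℝ} (hw : w ∈ induced V) (h0 : w e ≠ 0) :
    starFlow K 0 w = w := by
  rcases eq_or_ne (w e) 1 with h1 | h1
  · simp [starFlow, h1, ← eq_single_of_apply_eq_one hw h1]
  · rw [starFlow, extendHomotopy_of_nonpos K (by simp)
      (linkPart_mem_induced hw (support_subset_insert_link hw h0) h1)]
    funext q
    rcases eq_or_ne q e with rfl | hq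
    · simp [linkPart]
    · simp [linkPart, hq, mul_inv_cancel_left₀ (sub_ne_zero.2 (Ne.symm h1))]

theorem starFlow_of_apply_eq_zero {w : T → ℝ} (hw : w ∈ induced V)
    (hstar : support w ⊆ insert e (link V e)) (h0 : w e = 0) (t : ℝ) :
    starFlow K t w = w := by
  have hlink : linkPart e w = w := by simp [linkPart, h0]
  rw [starFlow, h0, hlink, extendHomotopy_of_nonpos K (by simp)
    (hlink ▸ linkPart_mem_induced hw hstar (by simp [h0]))]
  simp

def starDomain (V : Set T) (e : T) : Set (ℝ × (T → ℝ)) :=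
  unitInterval ×ˢ {w ∈ induced V | support w ⊆ insert e (link V e)}

theorem continuousWithinAt_starFlow_of_ne_one {q : ℝ × (T → ℝ)} (hq : q ∈ starDomain V e)
    (h1 : q.2 e ≠ 1) :
    ContinuousWithinAt (fun q : ℝ × (T → ℝ) => starFlow K q.1 q.2) (starDomain V e) q := by
  have hden : 1 - q.2 e ≠ 0 := sub_ne_zero.2 (Ne.symm h1)
  have hopen : {q : ℝ × (T → ℝ) | q.2 e ≠ 1} ∈ 𝓝 q :=
    (isOpen_ne_fun (by fun_prop) continuous_const).mem_nhds h1
  have hφ : ContinuousAt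
      (fun q : ℝ × (T → ℝ) => (q.1 * q.2 e / (1 - q.2 e), linkPart e q.2)) q := by
    unfold linkPart
    fun_prop (disch := exact hden)
  have hext : ContinuousWithinAt (fun q : ℝ × (T → ℝ) =>
      extendHomotopy K (q.1 * q.2 e / (1 - q.2 e)) (linkPart e q.2))
      (starDomain V e ∩ {q | q.2 e ≠ 1}) q :=
    ((continuousOn_extendHomotopy K) _ (mem_prod.2 ⟨trivial,
      linkPart_mem_induced hq.2.1 hq.2.2 h1⟩)).comp hφ.continuousWithinAt
      fun q hq => ⟨trivial, linkPart_mem_induced hq.1.2.1 hq.1.2.2 hq.2⟩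
  have hc : Continuous fun q : ℝ × (T → ℝ) => (1 - q.1) * q.2 e := by fun_prop
  refine (continuousWithinAt_inter hopen).1 ?_
  exact ((hc.smul continuous_const).continuousWithinAt).add
    ((continuous_const.sub hc).continuousWithinAt.smul hext)

theorem starFlow_eq_of_lt {t : ℝ} {w : T → ℝ} (hw : w ∈ induced V) (h : 1 - w e < t * w e) :
    starFlow K t w = ((1 - t) * w e) • Pi.single e 1 + (1 - (1 - t) * w e) • (p : T → ℝ) := by
  rw [starFlow]
  congr 2
  rcases eq_or_ne (w e) 1 with h1 | h1
  · have hlink : linkPart e w = 0 := by simp [linkPart, h1]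
    simp [extendHomotopy, hlink, zero_notMem_induced]
  · have hpos : 0 < 1 - w e := sub_pos.2 ((le_one_of_mem_induced hw e).lt_of_ne h1)
    exact extendHomotopy_of_one_le K ((le_div_iff₀ hpos).2 (by linarith)) _

theorem continuousWithinAt_starFlow_of_pos {q : ℝ × (T → ℝ)} (hq : q ∈ starDomain V e)
    (h1 : q.2 e = 1) (ht : 0 < q.1) :
    ContinuousWithinAt (fun q : ℝ × (T → ℝ) => starFlow K q.1 q.2) (starDomain V e) q := by
  have hlt : ∀ᶠ r : ℝ × (T → ℝ) in 𝓝 q, 1 - r.2 e < r.1 * r.2 e :=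
    ContinuousAt.eventually_lt (f := fun r : ℝ × (T → ℝ) => 1 - r.2 e) (by fun_prop)
      (by fun_prop) (by simp [h1, ht])
  have hev : ∀ᶠ r in 𝓝[starDomain V e] q, starFlow K r.1 r.2 =
      ((1 - r.1) * r.2 e) • Pi.single e 1 + (1 - (1 - r.1) * r.2 e) • (p : T → ℝ) := by
    filter_upwards [nhdsWithin_le_nhds hlt, self_mem_nhdsWithin] with r hr hrS
    exact starFlow_eq_of_lt K hrS.2.1 hr
  exact (Continuous.continuousWithinAt (by fun_prop)).congr_of_eventuallyEq_of_mem hev hq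

theorem continuousAt_starFlow_zero {w : T → ℝ} (h1 : w e = 1) :
    ContinuousAt (fun q : ℝ × (T → ℝ) => starFlow K q.1 q.2) (0, w) := by
  have hc : Tendsto (fun r : ℝ × (T → ℝ) => (1 - r.1) * r.2 e) (𝓝 (0, w)) (𝓝 1) := by
    simpa [h1] using (Continuous.tendsto (by fun_prop) (0, w) :
      Tendsto (fun r : ℝ × (T → ℝ) => (1 - r.1) * r.2 e) _ _)
  have hlink : Tendsto (fun r : ℝ × (T → ℝ) => (1 - (1 - r.1) * r.2 e) •
      extendHomotopy K (r.1 * r.2 e / (1 - r.2 e)) (linkPart e r.2)) (𝓝 (0, w)) (𝓝 0) := by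
    refine Tendsto.zero_smul_isBoundedUnder_le
      (by simpa using (tendsto_const_nhds (x := (1 : ℝ))).sub hc) ?_
    exact isBoundedUnder_of ⟨1, fun r => norm_le_one_of_mem_induced (extendHomotopy_mem K _ _)⟩
  show Tendsto _ _ (𝓝 (starFlow K 0 w))
  simpa [starFlow, h1] using (hc.smul tendsto_const_nhds).add hlink

theorem continuousOn_starFlow :
    ContinuousOn (fun q : ℝ × (T → ℝ) => starFlow K q.1 q.2) (starDomain V e) := by
  rintro ⟨t, w⟩ hq
  by_cases h1 : w e = 1
  · rcases hq.1.1.eq_or_lt with rfl | ht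
    · exact (continuousAt_starFlow_zero K h1).continuousWithinAt
    · exact continuousWithinAt_starFlow_of_pos K hq h1 ht
  · exact continuousWithinAt_starFlow_of_ne_one K hq h1

end Star

theorem nullhomotopic_of_link {V : Set T} {e : T} (he : e ∈ V)
    (hlink : (ContinuousMap.id (induced (link V e))).Nullhomotopic)
    (hrest : (ContinuousMap.id (induced (V \ {e}))).Nullhomotopic) :
    (ContinuousMap.id (induced V)).Nullhomotopic := by
  obtain ⟨p, ⟨K⟩⟩ := hlink
  have hstar : closure {a : unitInterval × induced V | (a.2 : T → ℝ) e ≠ 0} ⊆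
      {a | support (a.2 : T → ℝ) ⊆ insert e (link V e)} :=
    closure_minimal (fun a ha => support_subset_insert_link a.2.2 ha)
      ((isClosed_setOf_support_subset _).preimage (by fun_prop))
  refine nullhomotopic_id_of_deformation (induced_mono sdiff_subset)
    (fun a => if (a.2 : T → ℝ) e = 0 then a.2 else starFlow K a.1 a.2) ?_
    (fun a => ?_) (fun w => ?_) (fun w => ?_) hrest
  · refine continuous_if (fun a ha => ?_) (by fun_prop) ?_
    · have ha0 : (a.2 : T → ℝ) e = 0 := (isClosed_eq ((continuous_apply e).comp
        (continuous_subtype_val.comp continuous_snd)) continuous_const).frontier_subset ha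
      exact (starFlow_of_apply_eq_zero K a.2.2
        (hstar (frontier_eq_closure_inter_closure.subset ha).2) ha0 _).symm
    · refine (continuousOn_starFlow K).comp (by fun_prop : Continuous fun a :
        unitInterval × induced V => ((a.1 : ℝ), (a.2 : T → ℝ))).continuousOn
        fun a ha => ⟨a.1.2, a.2.2, hstar ha⟩
  · split_ifs
    exacts [a.2.2, starFlow_mem_induced K he a.1.2 a.2.2]
  · simp only [Set.Icc.coe_zero]
    split_ifs with h0
    exacts [rfl, starFlow_zero K w.2 h0]
  · simp only [Set.Icc.coe_one]
    split_ifs with h0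
    · exact ⟨w.2.1, fun x hx => ⟨w.2.2.1 hx, by rintro rfl; exact hx h0⟩, w.2.2.2⟩
    · exact starFlow_one_mem_induced K w

theorem nullhomotopic_of_minimal_link {W : Set T}
    (hW : (ContinuousMap.id (induced W)).Nullhomotopic)
    (hlink : ∀ U e, W ⊆ U → Minimal (· ∈ U \ W) e →
      (ContinuousMap.id (induced (link U e))).Nullhomotopic)
    {V : Set T} (hWV : W ⊆ V) : (ContinuousMap.id (induced V)).Nullhomotopic := by
  induction V using WellFoundedLT.induction with
  | ind V ih =>
  rcases (V \ W).eq_empty_or_nonempty with h | hne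
  · rwa [(sdiff_eq_empty.1 h).antisymm hWV]
  · obtain ⟨e, he⟩ := (V \ W).toFinite.exists_minimal hne
    exact nullhomotopic_of_link he.prop.1 (hlink V e hWV he)
      (ih _ (sdiff_singleton_ssubset.2 he.prop.1) (subset_sdiff_singleton hWV he.prop.2))

section Lattice

variable {L : Type*} [Lattice L] [BoundedOrder L] {y : L}

abbrev ProperNoncomplement (y : L) : Type _ :=
  {x : L // x ≠ ⊥ ∧ x ≠ ⊤ ∧ ¬(x ⊔ y = ⊤ ∧ x ⊓ y = ⊥)}

def supNeTop (y : L) : Set (ProperNoncomplement y) :=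
  {x | (x : L) ⊔ y ≠ ⊤}

theorem properNoncomplement_of_sup_ne_top {z : L} (hz : z ≠ ⊥) (h : z ⊔ y ≠ ⊤) :
    z ≠ ⊥ ∧ z ≠ ⊤ ∧ ¬(z ⊔ y = ⊤ ∧ z ⊓ y = ⊥) :=
  ⟨hz, fun h' => h (by simp [h']), fun h' => h h'.1⟩

def supLeft {c : L} (hc : c ≤ y) (x : ProperNoncomplement y) : ProperNoncomplement y :=
  if h : (x : L) ⊔ y ≠ ⊤ then
    ⟨x ⊔ c, properNoncomplement_of_sup_ne_top (ne_bot_of_le_ne_bot x.2.1 le_sup_left)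
      (by rwa [sup_assoc, sup_eq_right.2 hc])⟩
  else x

theorem coe_supLeft_of_mem {c : L} (hc : c ≤ y) {x : ProperNoncomplement y}
    (hx : x ∈ supNeTop y) : (supLeft hc x : L) = (x : L) ⊔ c := by
  simp [supLeft, show (x : L) ⊔ y ≠ ⊤ from hx]

theorem supLeft_of_notMem {c : L} (hc : c ≤ y) {x : ProperNoncomplement y}
    (hx : x ∉ supNeTop y) : supLeft hc x = x := by
  simp [supLeft, show ¬((x : L) ⊔ y ≠ ⊤) from hx]

theorem le_supLeft {c : L} (hc : c ≤ y) (x : ProperNoncomplement y) : x ≤ supLeft hc x := by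
  by_cases hx : x ∈ supNeTop y
  · exact Subtype.coe_le_coe.1 ((coe_supLeft_of_mem hc hx).symm ▸ le_sup_left)
  · rw [supLeft_of_notMem hc hx]

theorem supLeft_mem_supNeTop {c : L} (hc : c ≤ y) {x : ProperNoncomplement y}
    (hx : x ∈ supNeTop y) : supLeft hc x ∈ supNeTop y := by
  show (supLeft hc x : L) ⊔ y ≠ ⊤
  rwa [coe_supLeft_of_mem hc hx, sup_assoc, sup_eq_right.2 hc]

variable [Fintype L]

theorem nullhomotopic_supNeTop (hy₀ : y ≠ ⊥) (hy₁ : y ≠ ⊤) :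
    (ContinuousMap.id (induced (supNeTop y))).Nullhomotopic := by
  have hy : y ⊔ y ≠ ⊤ := by rwa [sup_idem]
  refine nullhomotopic_of_conical (z := ⟨y, properNoncomplement_of_sup_ne_top hy₀ hy⟩) hy
    (fun _ hx => supLeft_mem_supNeTop le_rfl hx) (fun x hx x' hx' hxx' => ?_)
    (fun x _ => le_supLeft le_rfl x) (fun x hx => ?_)
  · rw [← Subtype.coe_le_coe, coe_supLeft_of_mem le_rfl hx, coe_supLeft_of_mem le_rfl hx']
    exact sup_le_sup_right hxx' y
  · rw [← Subtype.coe_le_coe, coe_supLeft_of_mem le_rfl hx]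
    exact le_sup_right

theorem nullhomotopic_link_of_minimal (hy₁ : y ≠ ⊤) {U : Set (ProperNoncomplement y)}
    (hU : supNeTop y ⊆ U) {e : ProperNoncomplement y} (he : Minimal (· ∈ U \ supNeTop y) e) :
    (ContinuousMap.id (induced (link U e))).Nullhomotopic := by
  have heE : (e : L) ⊔ y = ⊤ := not_not.1 he.prop.2
  have hzy : (e : L) ⊓ y ⊔ y = y := sup_eq_right.2 inf_le_right
  let z : ProperNoncomplement y := ⟨e ⊓ y, properNoncomplement_of_sup_ne_top
    (fun h => e.2.2.2 ⟨heE, h⟩) (by rwa [hzy])⟩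
  have hz : z ∈ supNeTop y := show (z : L) ⊔ y ≠ ⊤ by rwa [hzy]
  have hze : z < e := lt_of_le_of_ne inf_le_left fun h => he.prop.2 (h ▸ hz)
  let G := supLeft (inf_le_right : (e : L) ⊓ y ≤ y)
  have hbelow : ∀ x ∈ link U e, x < e → x ∈ supNeTop y := fun x hx hxe => by
    by_contra h
    exact he.not_lt ⟨hx.1, h⟩ hxe
  have habove : ∀ x : ProperNoncomplement y, e < x → G x = x := fun x hex =>
    supLeft_of_notMem _ fun h =>
      h (top_le_iff.1 (heE.symm.trans_le (sup_le_sup_right hex.le y)))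
  have hGle : ∀ x ∈ link U e, x < e → G x ≤ e := fun x hx hxe => by
    rw [← Subtype.coe_le_coe, coe_supLeft_of_mem _ (hbelow x hx hxe)]
    exact sup_le hxe.le inf_le_left
  refine nullhomotopic_of_conical (z := z) (G := G) ⟨hU hz, .inl hze⟩ (fun x hx => ?_)
    (fun x hx x' hx' hxx' => ?_) (fun x _ => le_supLeft _ x) (fun x hx => ?_)
  · rcases hx.2 with hxe | hex
    · have hGx : G x ∈ supNeTop y := supLeft_mem_supNeTop _ (hbelow x hx hxe)
      exact ⟨hU hGx, .inl ((hGle x hx hxe).lt_of_ne fun h => he.prop.2 (h ▸ hGx))⟩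
    · rwa [habove x hex]
  · rcases hx'.2 with hx'e | hex'
    · rw [← Subtype.coe_le_coe, coe_supLeft_of_mem _ (hbelow x hx (hxx'.trans_lt hx'e)),
        coe_supLeft_of_mem _ (hbelow x' hx' hx'e)]
      exact sup_le_sup_right hxx' _
    · rw [habove x' hex']
      rcases hx.2 with hxe | hex
      exacts [(hGle x hx hxe).trans hex'.le, (habove x hex).symm ▸ hxx']
  · rcases hx.2 with hxe | hex
    · rw [← Subtype.coe_le_coe, coe_supLeft_of_mem _ (hbelow x hx hxe)]
      exact le_sup_right
    · exact (habove x hex).symm ▸ (hze.trans hex).le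

theorem contractibleSpace_induced_univ (hy₀ : y ≠ ⊥) (hy₁ : y ≠ ⊤) :
    ContractibleSpace (induced (univ : Set (ProperNoncomplement y))) :=
  (contractible_iff_id_nullhomotopic _).2 <|
    nullhomotopic_of_minimal_link (nullhomotopic_supNeTop hy₀ hy₁)
      (fun _ _ hU he => nullhomotopic_link_of_minimal hy₁ hU he) (subset_univ _)

end Lattice

end OrderComplex

/-- Björner–Walker's key lemma: for a finite lattice `L` and `y` in the proper
part `P = L \ {⊥, ⊤}`, the order complex of `P \ Co(y)` (the proper part with
the complements of `y` removed) is contractible. -/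
theorem orderComplex_remove_complements_contractible
    {L : Type} [Lattice L] [BoundedOrder L] [Fintype L]
    (y : L) (hy₀ : y ≠ ⊥) (hy₁ : y ≠ ⊤) :
    ContractibleSpace
      ↥(orderComplex {x : L // x ≠ ⊥ ∧ x ≠ ⊤ ∧ ¬(x ⊔ y = ⊤ ∧ x ⊓ y = ⊥)}) := by
  classical
  have := OrderComplex.contractibleSpace_induced_univ hy₀ hy₁
  exact (Homeomorph.setCongr OrderComplex.orderComplex_eq_induced_univ).contractibleSpace
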